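/- arXiv:1705.03038 — 3 statements merged into one kernel-verified Lean document; each statement's English description precedes it below -/
import Mathlib

section
/- Let γ = ‖R_K A (I − R_K)‖₂ (the operator norm induced by ‖·‖₂). Let (λ, u) be any eigenpair of A with u ≠ 0, let λ̃ be the Ritz value of A on K closest to λ, and let δ > 0 be the distance from λ to the set of Ritz values of A on K other than λ̃. Then there exists a Ritz vector ũ ≠ 0 associated with λ̃ such that sin θ(u, ũ) ≤ √(1 + γ²/δ²) · sin θ(u, K), where sin θ(u, K) = ‖(I − R_K)u‖₂/‖u‖₂ and sin θ(u, ũ) = ‖(I − R_{span{ũ}})u‖₂/‖u‖₂. -/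
open Matrix

/-- The Euclidean (`L²`) norm on `ℝⁿ`: `‖x‖₂ = √(xᵀx)`. -/
noncomputable def l2N {n : ℕ} (x : Fin n → ℝ) : ℝ := Real.sqrt (x ⬝ᵥ x)

/-- The energy norm induced by the matrix `A`: `‖x‖_A = √(xᵀAx)`. -/
noncomputable def aN {n : ℕ} (A : Matrix (Fin n) (Fin n) ℝ) (x : Fin n → ℝ) : ℝ :=
  Real.sqrt (x ⬝ᵥ (A *ᵥ x))

/-- `η_K = sup_{‖g‖₂ = 1} ‖(I - P_K) A⁻¹ g‖_A`, where `P` is the `A`-orthogonal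
projection onto the subspace `K`. -/
noncomputable def etaK {n : ℕ} (A : Matrix (Fin n) (Fin n) ℝ)
    (P : (Fin n → ℝ) →ₗ[ℝ] (Fin n → ℝ)) : ℝ :=
  sSup ((fun g => aN A ((A⁻¹ *ᵥ g) - P (A⁻¹ *ᵥ g))) '' {g | l2N g = 1})

/-- `sin θ(u, K) = ‖(I - R_K) u‖₂ / ‖u‖₂`, where `R` is the `L²`-orthogonal
projection onto the subspace `K`. -/
noncomputable def sinAngleSub {n : ℕ} (R : (Fin n → ℝ) →ₗ[ℝ] (Fin n → ℝ))
    (u : Fin n → ℝ) : ℝ :=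
  l2N (u - R u) / l2N u

/-- `sin θ(u, w) = ‖(I - R_{span{w}}) u‖₂ / ‖u‖₂`, where `R_{span{w}}` is the
`L²`-orthogonal projection onto `span{w}`. -/
noncomputable def sinAngleVec {n : ℕ} (u w : Fin n → ℝ) : ℝ :=
  l2N (u - ((u ⬝ᵥ w) / (w ⬝ᵥ w)) • w) / l2N u

/-!
The Ritz pairs of `A` on `K` are the eigenpairs of the compression `R_K A|_K`. For `y = R_K u` the
residual `(R_K A - λ) y = -R_K A (I - R_K) u` has norm at most `γ ‖(I - R_K) u‖`. In an eigenbasis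
of the compression, the part of `y` off the `λ̃`-eigenspace is multiplied by factors of size at
least `δ`, so its distance to the `λ̃`-component `w` of `y` is at most `(γ / δ) ‖(I - R_K) u‖`.
Pythagoras gives `‖u - w‖² ≤ (1 + γ²/δ²) ‖(I - R_K) u‖²`, and projecting `u` onto `span {w}` can
only decrease the distance.
-/

open RealInnerProductSpace WithLp

theorem LinearMap.IsSymmetric.exists_apply_eq_smul_mul_norm_sub_le {F : Type*}
    [NormedAddCommGroup F] [InnerProductSpace ℝ F] [FiniteDimensional ℝ F] {T : F →ₗ[ℝ] F}
    (hT : T.IsSymmetric) (y : F) {μ₀ lam δ : ℝ} (hδ : 0 ≤ δ)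
    (hsep : ∀ μ, Module.End.HasEigenvalue T μ → μ ≠ μ₀ → δ ≤ |μ - lam|) :
    ∃ w, T w = μ₀ • w ∧ δ * ‖y - w‖ ≤ ‖T y - lam • y‖ := by
  set b := hT.eigenvectorBasis rfl
  set μ := hT.eigenvalues rfl
  have hTrepr (x : F) (i) : b.repr (T x) i = μ i * b.repr x i := by
    simpa using hT.eigenvectorBasis_apply_self_apply rfl x i
  have hnorm (x : F) : ‖x‖ ^ 2 = ∑ i, b.repr x i ^ 2 := by
    rw [← b.repr.norm_map, EuclideanSpace.real_norm_sq_eq]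
  -- `w` keeps the coordinates of `y` along the eigenvectors for `μ₀`
  set w := b.repr.symm (WithLp.toLp 2 fun i => if μ i = μ₀ then b.repr y i else 0)
  have hwrepr (i) : b.repr w i = if μ i = μ₀ then b.repr y i else 0 := by simp [w]
  refine ⟨w, b.repr.injective (PiLp.ext fun i => ?_), ?_⟩
  · simp only [hTrepr, hwrepr, map_smul, PiLp.smul_apply, smul_eq_mul]
    split_ifs with h <;> simp [h]
  rw [← pow_le_pow_iff_left₀ (by positivity) (norm_nonneg _) two_ne_zero, mul_pow, hnorm,
    hnorm, Finset.mul_sum]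
  refine Finset.sum_le_sum fun i _ => ?_
  simp only [map_sub, map_smul, PiLp.sub_apply, PiLp.smul_apply, smul_eq_mul, hTrepr, hwrepr]
  split_ifs with h
  · simpa using sq_nonneg _
  · have hgap : δ ≤ |μ i - lam| := hsep _ (hT.hasEigenvalue_eigenvalues rfl i) h
    have : δ ^ 2 ≤ (μ i - lam) ^ 2 := by
      rw [← sq_abs (μ i - lam)]; exact pow_le_pow_left₀ hδ hgap 2
    nlinarith [sq_nonneg (b.repr y i)]

section Ritz

variable {E : Type*} [NormedAddCommGroup E] [InnerProductSpace ℝ E]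

theorem norm_sub_inner_div_inner_smul_le (u w : E) (t : ℝ) :
    ‖u - (⟪u, w⟫ / ⟪w, w⟫) • w‖ ≤ ‖u - t • w‖ := by
  have hproj : (ℝ ∙ w).starProjection u = (⟪u, w⟫ / ⟪w, w⟫) • w := by
    rw [Submodule.starProjection_singleton, real_inner_comm, real_inner_self_eq_norm_sq]
    rfl
  rw [← hproj, Submodule.starProjection_minimal]
  exact ciInf_le (f := fun x : ℝ ∙ w => ‖u - x‖) ⟨0, by rintro _ ⟨x, rfl⟩; positivity⟩
    ⟨t • w, Submodule.smul_mem _ _ (Submodule.mem_span_singleton_self w)⟩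

namespace Submodule

variable (K : Submodule ℝ E) [K.HasOrthogonalProjection]

theorem norm_sub_sq_eq_of_mem {w : E} (hw : w ∈ K) (u : E) :
    ‖u - w‖ ^ 2 = ‖u - K.starProjection u‖ ^ 2 + ‖K.starProjection u - w‖ ^ 2 := by
  have horth : ⟪u - K.starProjection u, K.starProjection u - w⟫ = 0 :=
    K.starProjection_inner_eq_zero u _ (K.sub_mem (K.starProjection_apply_mem u) hw)
  rw [← sub_add_sub_cancel u (K.starProjection u) w, norm_add_sq_real, horth]
  ring

theorem norm_sub_le_sqrt_mul_of_mem {w : E} (hw : w ∈ K) {u : E} {γ δ : ℝ} (hδ : 0 < δ)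
    (h : δ * ‖K.starProjection u - w‖ ≤ γ * ‖u - K.starProjection u‖) :
    ‖u - w‖ ≤ √(1 + γ ^ 2 / δ ^ 2) * ‖u - K.starProjection u‖ := by
  rw [← Real.sqrt_sq (norm_nonneg (u - K.starProjection u)), ← Real.sqrt_mul (by positivity),
    Real.le_sqrt (norm_nonneg _) (by positivity), K.norm_sub_sq_eq_of_mem hw]
  have hsq : δ ^ 2 * ‖K.starProjection u - w‖ ^ 2 ≤ γ ^ 2 * ‖u - K.starProjection u‖ ^ 2 := by
    rw [← mul_pow, ← mul_pow]
    exact pow_le_pow_left₀ (by positivity) h 2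
  rw [add_mul, one_mul, div_mul_eq_mul_div, add_le_add_iff_left, le_div_iff₀ (by positivity)]
  linarith

noncomputable def compression (T : E →ₗ[ℝ] E) : K →ₗ[ℝ] K :=
  K.orthogonalProjectionOnto.toLinearMap ∘ₗ T ∘ₗ K.subtype

variable {K}

theorem coe_compression_apply (T : E →ₗ[ℝ] E) (x : K) :
    (K.compression T x : E) = K.starProjection (T x) := rfl

theorem isSymmetric_compression {T : E →ₗ[ℝ] E} (hT : T.IsSymmetric) :
    (K.compression T).IsSymmetric := by
  intro x y
  rw [coe_inner, coe_inner, coe_compression_apply, coe_compression_apply,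
    K.inner_starProjection_left_eq_right, K.starProjection_eq_self_iff.mpr y.2, hT,
    ← K.inner_starProjection_left_eq_right, K.starProjection_eq_self_iff.mpr x.2]

theorem inner_sub_smul_eq_zero_of_compression_eq_smul {T : E →ₗ[ℝ] E} {ρ : ℝ} {x : K}
    (hx : K.compression T x = ρ • x) {v : E} (hv : v ∈ K) :
    ⟪T x - ρ • (x : E), v⟫ = 0 := by
  have hTx : K.starProjection (T x) = ρ • (x : E) := by
    rw [← coe_compression_apply, hx, coe_smul]
  rw [← hTx]
  exact K.starProjection_inner_eq_zero _ v hv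

theorem compression_sub_smul_orthogonalProjectionOnto {T : E →ₗ[ℝ] E} {lam : ℝ} {u : E}
    (hu : T u = lam • u) :
    ((K.compression T (K.orthogonalProjectionOnto u) - lam • K.orthogonalProjectionOnto u : K) : E)
      = -K.starProjection (T (u - K.starProjection u)) := by
  simp only [Submodule.coe_sub, Submodule.coe_smul, coe_compression_apply,
    coe_orthogonalProjectionOnto_apply, map_sub, hu, map_smul]
  abel

end Submodule

def IsRitzPair (K : Submodule ℝ E) (T : E →ₗ[ℝ] E) (ρ : ℝ) (w : E) : Prop :=
  w ≠ 0 ∧ w ∈ K ∧ ∀ v ∈ K, ⟪T w - ρ • w, v⟫ = 0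

theorem exists_isRitzPair_norm_sub_le {K : Submodule ℝ E} [FiniteDimensional ℝ K]
    {T : E →ₗ[ℝ] E} (hT : T.IsSymmetric) {γ δ lam ρ₀ : ℝ} (hδ : 0 < δ)
    (hγ : ∀ x, ‖K.starProjection (T (x - K.starProjection x))‖ ≤ γ * ‖x - K.starProjection x‖)
    {u : E} (hu : T u = lam • u) {w₀ : E} (hw₀ : IsRitzPair K T ρ₀ w₀)
    (hsep : ∀ ρ w, IsRitzPair K T ρ w → ρ ≠ ρ₀ → δ ≤ |ρ - lam|) :
    ∃ w, IsRitzPair K T ρ₀ w ∧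
      ‖u - (⟪u, w⟫ / ⟪w, w⟫) • w‖ ≤ √(1 + γ ^ 2 / δ ^ 2) * ‖u - K.starProjection u‖ := by
  have hsepC : ∀ μ, Module.End.HasEigenvalue (K.compression T) μ → μ ≠ ρ₀ → δ ≤ |μ - lam| := by
    intro μ hμ hne
    obtain ⟨x, hx⟩ := hμ.exists_hasEigenvector
    refine hsep μ x ⟨by exact_mod_cast hx.2, x.2, fun v hv => ?_⟩ hne
    exact Submodule.inner_sub_smul_eq_zero_of_compression_eq_smul
      (Module.End.mem_eigenspace_iff.mp hx.1) hv
  obtain ⟨w, hwC, hw⟩ := (Submodule.isSymmetric_compression hT).exists_apply_eq_smul_mul_norm_sub_le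
    (K.orthogonalProjectionOnto u) hδ.le hsepC
  have hclose : ‖u - w‖ ≤ √(1 + γ ^ 2 / δ ^ 2) * ‖u - K.starProjection u‖ := by
    refine K.norm_sub_le_sqrt_mul_of_mem w.2 hδ (hw.trans_eq ?_ |>.trans (hγ u))
    exact (congrArg norm (Submodule.compression_sub_smul_orthogonalProjectionOnto hu)).trans
      (norm_neg _)
  have hritz : ∀ v ∈ K, ⟪T w - ρ₀ • (w : E), v⟫ = 0 := fun v hv =>
    Submodule.inner_sub_smul_eq_zero_of_compression_eq_smul hwC hv
  by_cases hw0 : (w : E) = 0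
  · refine ⟨w₀, hw₀, (norm_sub_inner_div_inner_smul_le u w₀ 0).trans ?_⟩
    simpa [hw0] using hclose
  · exact ⟨w, ⟨hw0, w.2, hritz⟩,
      (norm_sub_inner_div_inner_smul_le u w 1).trans (by simpa using hclose)⟩

end Ritz

section EuclideanTransfer

variable {n : ℕ}

theorem l2N_eq_norm (x : Fin n → ℝ) : l2N x = ‖toLp 2 x‖ := by
  simp [l2N, EuclideanSpace.norm_eq, dotProduct, sq]

theorem dotProduct_eq_inner (x y : Fin n → ℝ) : x ⬝ᵥ y = ⟪toLp 2 x, toLp 2 y⟫ := by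
  rw [EuclideanSpace.inner_toLp_toLp, dotProduct_comm]
  rfl

def Submodule.toEuclidean (K : Submodule ℝ (Fin n → ℝ)) :
    Submodule ℝ (EuclideanSpace ℝ (Fin n)) :=
  K.comap (WithLp.linearEquiv 2 ℝ (Fin n → ℝ)).toLinearMap

variable {K : Submodule ℝ (Fin n → ℝ)}

theorem Submodule.toLp_mem_toEuclidean {x : Fin n → ℝ} : toLp 2 x ∈ K.toEuclidean ↔ x ∈ K :=
  Iff.rfl

theorem Submodule.starProjection_toEuclidean_toLp {R : (Fin n → ℝ) →ₗ[ℝ] (Fin n → ℝ)}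
    (hRmem : ∀ x, R x ∈ K) (hRproj : ∀ x, ∀ y ∈ K, R x ⬝ᵥ y = x ⬝ᵥ y) (x : Fin n → ℝ) :
    K.toEuclidean.starProjection (toLp 2 x) = toLp 2 (R x) := by
  refine eq_starProjection_of_mem_of_inner_eq_zero (toLp_mem_toEuclidean.2 (hRmem x)) fun y hy => ?_
  rw [← toLp_ofLp 2 y, ← toLp_sub, ← dotProduct_eq_inner, sub_dotProduct, hRproj x (ofLp y) hy,
    sub_self]

theorem isRitzPair_toEuclidean_toLp_iff (A : Matrix (Fin n) (Fin n) ℝ) (ρ : ℝ) (a : Fin n → ℝ) :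
    IsRitzPair K.toEuclidean A.toEuclideanLin ρ (toLp 2 a) ↔
      a ≠ 0 ∧ a ∈ K ∧ ∀ v ∈ K, (A *ᵥ a - ρ • a) ⬝ᵥ v = 0 := by
  have hres (v : Fin n → ℝ) :
      ⟪A.toEuclideanLin (toLp 2 a) - ρ • toLp 2 a, toLp 2 v⟫ = (A *ᵥ a - ρ • a) ⬝ᵥ v := by
    rw [dotProduct_eq_inner]
    rfl
  refine and_congr (by simp) (and_congr Submodule.toLp_mem_toEuclidean ⟨fun h v hv => ?_, ?_⟩)
  · rw [← hres]
    exact h _ (Submodule.toLp_mem_toEuclidean.2 hv)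
  · intro h v hv
    rw [← toLp_ofLp 2 v]
    exact (hres _).trans (h _ hv)

theorem norm_starProjection_toEuclideanLin_sub_le {R : (Fin n → ℝ) →ₗ[ℝ] (Fin n → ℝ)}
    (hRmem : ∀ x, R x ∈ K) (hRproj : ∀ x, ∀ y ∈ K, R x ⬝ᵥ y = x ⬝ᵥ y)
    (A : Matrix (Fin n) (Fin n) ℝ) (x : EuclideanSpace ℝ (Fin n)) :
    ‖K.toEuclidean.starProjection
        (A.toEuclideanLin (x - K.toEuclidean.starProjection x))‖
      ≤ sSup ((fun x => l2N (R (A *ᵥ (x - R x)))) '' {x | l2N x = 1}) *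
        ‖x - K.toEuclidean.starProjection x‖ := by
  set P := K.toEuclidean.starProjection
  have hP := Submodule.starProjection_toEuclidean_toLp hRmem hRproj
  set L := P ∘L LinearMap.toContinuousLinearMap A.toEuclideanLin ∘L (1 - P)
  have hL (a : Fin n → ℝ) : L (toLp 2 a) = toLp 2 (R (A *ᵥ (a - R a))) := by
    change P (A.toEuclideanLin (toLp 2 a - P (toLp 2 a))) = _
    rw [hP a, ← toLp_sub]
    exact hP _
  have hsup : sSup ((fun x => l2N (R (A *ᵥ (x - R x)))) '' {x | l2N x = 1}) = ‖L‖ := by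
    rw [← L.sSup_sphere_eq_norm]
    congr 1
    ext r
    constructor
    · rintro ⟨a, ha, rfl⟩
      exact ⟨toLp 2 a, by simpa [l2N_eq_norm] using ha, by simp [hL, l2N_eq_norm]⟩
    · rintro ⟨y, hy, rfl⟩
      exact ⟨ofLp y, by simpa [l2N_eq_norm] using hy, by simp [← hL, l2N_eq_norm]⟩
  have hLx : L (x - P x) = P (A.toEuclideanLin (x - P x)) := by
    have hPP : P (P x) = P x :=
      Submodule.starProjection_eq_self_iff.mpr (Submodule.starProjection_apply_mem _ x)
    simp [L, hPP]
  rw [hsup, ← hLx]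
  exact L.le_opNorm _

end EuclideanTransfer

theorem stmt0_general {n m : ℕ} (A : Matrix (Fin n) (Fin n) ℝ) (hA : A.PosDef)
    (K : Submodule ℝ (Fin n → ℝ))
    -- `R` is the `L²`-orthogonal projection onto `K`
    (R : (Fin n → ℝ) →ₗ[ℝ] (Fin n → ℝ))
    (hRmem : ∀ x, R x ∈ K)
    (hRproj : ∀ x, ∀ y ∈ K, (R x) ⬝ᵥ y = x ⬝ᵥ y)
    -- `γ = ‖R_K A (I − R_K)‖₂`, the operator norm induced by `‖·‖₂`
    (γ : ℝ)
    (hγ : γ = sSup ((fun x => l2N (R (A *ᵥ (x - R x)))) '' {x | l2N x = 1}))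
    -- `(λ, u)` is an eigenpair of `A` with `u ≠ 0`
    (lam : ℝ) (u : Fin n → ℝ) (heig : A *ᵥ u = lam • u)
    -- the Ritz pairs of `A` on `K`
    (tlam : Fin m → ℝ) (tu : Fin m → (Fin n → ℝ))
    (htu : ∀ j, tu j ∈ K) (htu0 : ∀ j, tu j ≠ 0)
    (hRitz : ∀ j, ∀ v ∈ K, ((A *ᵥ tu j) - tlam j • tu j) ⬝ᵥ v = 0)
    -- the list `tlam` exhausts the Ritz values of `A` on `K`
    (hRitzAll : ∀ (ρ : ℝ) (w : Fin n → ℝ), w ∈ K → w ≠ 0 →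
        (∀ v ∈ K, ((A *ᵥ w) - ρ • w) ⬝ᵥ v = 0) → ∃ j, tlam j = ρ)
    -- `λ̃ = tlam i₀` is the Ritz value closest to `λ`
    (i₀ : Fin m)
    -- `δ > 0` is (a lower bound for) the distance from `λ` to the Ritz values other than `λ̃`
    (δ : ℝ) (hδpos : 0 < δ)
    (hδ : ∀ j, tlam j ≠ tlam i₀ → δ ≤ |tlam j - lam|) :
    ∃ w : Fin n → ℝ, w ≠ 0 ∧ w ∈ K ∧
      (∀ v ∈ K, ((A *ᵥ w) - tlam i₀ • w) ⬝ᵥ v = 0) ∧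
      sinAngleVec u w ≤ Real.sqrt (1 + γ ^ 2 / δ ^ 2) * sinAngleSub R u := by
  have hsep (ρ : ℝ) (w : EuclideanSpace ℝ (Fin n))
      (hw : IsRitzPair K.toEuclidean A.toEuclideanLin ρ w) (hne : ρ ≠ tlam i₀) : δ ≤ |ρ - lam| := by
    rw [← toLp_ofLp 2 w, isRitzPair_toEuclidean_toLp_iff] at hw
    obtain ⟨j, rfl⟩ := hRitzAll ρ _ hw.2.1 hw.1 hw.2.2
    exact hδ j hne
  obtain ⟨w, hw, hbound⟩ := exists_isRitzPair_norm_sub_le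
    (isSymmetric_toEuclideanLin_iff.mpr hA.isHermitian) hδpos
    (hγ ▸ norm_starProjection_toEuclideanLin_sub_le hRmem hRproj A)
    (congrArg (toLp 2) heig) ((isRitzPair_toEuclidean_toLp_iff A _ _).2 ⟨htu0 i₀, htu i₀, hRitz i₀⟩)
    hsep
  rw [← toLp_ofLp 2 w, isRitzPair_toEuclidean_toLp_iff] at hw
  refine ⟨ofLp w, hw.1, hw.2.1, hw.2.2, ?_⟩
  simp only [sinAngleVec, sinAngleSub, l2N_eq_norm, dotProduct_eq_inner, toLp_sub, toLp_smul,
    toLp_ofLp, ← Submodule.starProjection_toEuclidean_toLp hRmem hRproj]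
  rw [mul_div_assoc']
  exact div_le_div_of_nonneg_right hbound (norm_nonneg _)

/-- Saad's estimate (Theorem 4.6 of Saad) for the orthogonal (Galerkin)
projection method for eigenvalue problems: with
`γ = ‖R_K A (I - R_K)‖₂`, for any eigenpair `(λ, u)` of `A`, if `λ̃` is the
Ritz value closest to `λ` and `δ > 0` is the distance from `λ` to the other
Ritz values, then there is a Ritz vector `w` associated with `λ̃` such that
`sin θ(u, w) ≤ √(1 + γ²/δ²) · sin θ(u, K)`. -/
theorem stmt0 {n m : ℕ} (A : Matrix (Fin n) (Fin n) ℝ) (hA : A.PosDef)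
    (K : Submodule ℝ (Fin n → ℝ)) (hK : Module.finrank ℝ K = m)
    -- `R` is the `L²`-orthogonal projection onto `K`
    (R : (Fin n → ℝ) →ₗ[ℝ] (Fin n → ℝ))
    (hRmem : ∀ x, R x ∈ K)
    (hRproj : ∀ x, ∀ y ∈ K, (R x) ⬝ᵥ y = x ⬝ᵥ y)
    -- `γ = ‖R_K A (I − R_K)‖₂`, the operator norm induced by `‖·‖₂`
    (γ : ℝ)
    (hγ : γ = sSup ((fun x => l2N (R (A *ᵥ (x - R x)))) '' {x | l2N x = 1}))
    -- `(λ, u)` is an eigenpair of `A` with `u ≠ 0`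
    (lam : ℝ) (u : Fin n → ℝ) (hu : u ≠ 0) (heig : A *ᵥ u = lam • u)
    -- the Ritz pairs of `A` on `K`
    (tlam : Fin m → ℝ) (tu : Fin m → (Fin n → ℝ))
    (htu : ∀ j, tu j ∈ K) (htu0 : ∀ j, tu j ≠ 0)
    (hRitz : ∀ j, ∀ v ∈ K, ((A *ᵥ tu j) - tlam j • tu j) ⬝ᵥ v = 0)
    -- the list `tlam` exhausts the Ritz values of `A` on `K`
    (hRitzAll : ∀ (ρ : ℝ) (w : Fin n → ℝ), w ∈ K → w ≠ 0 →
        (∀ v ∈ K, ((A *ᵥ w) - ρ • w) ⬝ᵥ v = 0) → ∃ j, tlam j = ρ)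
    -- `λ̃ = tlam i₀` is the Ritz value closest to `λ`
    (i₀ : Fin m)
    (hclosest : ∀ j, |tlam i₀ - lam| ≤ |tlam j - lam|)
    -- `δ > 0` is (a lower bound for) the distance from `λ` to the Ritz values other than `λ̃`
    (δ : ℝ) (hδpos : 0 < δ)
    (hδ : ∀ j, tlam j ≠ tlam i₀ → δ ≤ |tlam j - lam|) :
    ∃ w : Fin n → ℝ, w ≠ 0 ∧ w ∈ K ∧
      (∀ v ∈ K, ((A *ᵥ w) - tlam i₀ • w) ⬝ᵥ v = 0) ∧
      sinAngleVec u w ≤ Real.sqrt (1 + γ ^ 2 / δ ^ 2) * sinAngleSub R u :=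
  stmt0_general A hA K R hRmem hRproj γ hγ lam u heig tlam tu htu htu0 hRitz hRitzAll i₀ δ hδpos hδ
end

section
/- Let (λ, u) be an exact eigenpair of A (A u = λ u), set μ = 1/λ and μ̃_j = 1/λ̃_j, and assume μ ≠ μ̃_j. Then (P_K u, ũ_j)_A = (1/(μ − μ̃_j)) · (u − P_K u, ũ_j), equivalently (P_K u, ũ_j)_A = (λ̃_j λ/(λ̃_j − λ)) · (u − P_K u, ũ_j). -/
open Matrix

/-!
Galerkin orthogonality and the symmetry of `A` give `(P u, ũ)_A = (u, ũ)_A = λ (u, ũ)`, while the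
Ritz condition tested against `P u ∈ K` gives `(P u, ũ)_A = λ̃ (P u, ũ)`. Eliminating `(u, ũ)` and
`(P u, ũ)` in favour of `(u - P u, ũ) = (u, ũ) - (P u, ũ)` is then field arithmetic, legitimate
because `λ > 0` by positive definiteness and `λ̃ ≠ 0` by `(ũ, ũ)_A = 1`.
-/

namespace Matrix

variable {ι R : Type*} [Fintype ι]

lemma IsSymm.dotProduct_mulVec_comm [CommSemiring R] {A : Matrix ι ι R} (hA : A.IsSymm)
    (x y : ι → R) : x ⬝ᵥ (A *ᵥ y) = (A *ᵥ x) ⬝ᵥ y := by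
  rw [dotProduct_mulVec, ← mulVec_transpose, hA.eq]

lemma PosDef.pos_of_mulVec_eq_smul {A : Matrix ι ι ℝ} (hA : A.PosDef) {lam : ℝ} {u : ι → ℝ}
    (hu : u ≠ 0) (heig : A *ᵥ u = lam • u) : 0 < lam := by
  have hpos := hA.dotProduct_mulVec_pos hu
  rw [heig, star_trivial, dotProduct_smul, smul_eq_mul] at hpos
  exact pos_of_mul_pos_left hpos (dotProduct_self_star_nonneg u)

end Matrix

section Galerkin

variable {ι R : Type*} [Fintype ι] [CommRing R] {A : Matrix ι ι R} {K : Submodule R (ι → R)}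

lemma dotProduct_mulVec_eq_of_ritz {θ : R} {w v : ι → R}
    (hRitz : ∀ v ∈ K, (A *ᵥ w - θ • w) ⬝ᵥ v = 0) (hv : v ∈ K) :
    v ⬝ᵥ (A *ᵥ w) = θ * (v ⬝ᵥ w) := by
  have h := hRitz v hv
  rwa [sub_dotProduct, smul_dotProduct, sub_eq_zero, smul_eq_mul, dotProduct_comm,
    dotProduct_comm w] at h

lemma galerkin_dotProduct_mulVec_of_mulVec_eq_smul (hA : A.IsSymm) {P : (ι → R) → (ι → R)}
    (hPproj : ∀ x, ∀ y ∈ K, P x ⬝ᵥ (A *ᵥ y) = x ⬝ᵥ (A *ᵥ y)) {lam : R} {u w : ι → R}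
    (heig : A *ᵥ u = lam • u) (hw : w ∈ K) :
    P u ⬝ᵥ (A *ᵥ w) = lam * (u ⬝ᵥ w) := by
  rw [hPproj u w hw, hA.dotProduct_mulVec_comm, heig, smul_dotProduct, smul_eq_mul]

end Galerkin

lemma one_div_one_div_sub_one_div {K : Type*} [Field K] {a b : K} (ha : a ≠ 0) (hb : b ≠ 0) :
    1 / (1 / a - 1 / b) = b * a / (b - a) := by
  rw [one_div a, one_div b, inv_sub_inv ha hb, one_div_div, mul_comm]

lemma eq_mul_div_sub_mul_sub_of_eq_mul {K : Type*} [Field K] {a b s t x : K} (hab : b ≠ a)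
    (hs : x = b * s) (ht : x = a * t) : x = b * a / (b - a) * (t - s) := by
  rw [div_mul_eq_mul_div, eq_div_iff (sub_ne_zero.mpr hab)]
  linear_combination b * ht - a * hs

theorem stmt11_general {n m : ℕ} (A : Matrix (Fin n) (Fin n) ℝ) (hA : A.PosDef)
    -- `K` is an `m`-dimensional subspace of `ℝⁿ`
    (K : Submodule ℝ (Fin n → ℝ))
    -- `P` is the `A`-orthogonal (Galerkin) projection onto `K`
    (P : (Fin n → ℝ) →ₗ[ℝ] (Fin n → ℝ))
    (hPmem : ∀ x, P x ∈ K)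
    (hPproj : ∀ x, ∀ y ∈ K, (P x) ⬝ᵥ (A *ᵥ y) = x ⬝ᵥ (A *ᵥ y))
    -- the Ritz pairs `(λ̃_j, ũ_j)` of `A` on `K`, with `A`-orthonormal Ritz vectors
    (tlam : Fin m → ℝ) (tu : Fin m → (Fin n → ℝ))
    (htu : ∀ j, tu j ∈ K)
    (hRitz : ∀ j, ∀ v ∈ K, ((A *ᵥ tu j) - tlam j • tu j) ⬝ᵥ v = 0)
    (htortho : ∀ i j, tu i ⬝ᵥ (A *ᵥ tu j) = if i = j then (1 : ℝ) else 0)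
    -- `(λ, u)` is an exact eigenpair of `A`
    (lam : ℝ) (u : Fin n → ℝ) (hu : u ≠ 0) (heig : A *ᵥ u = lam • u)
    (j : Fin m) (hne : 1 / lam ≠ 1 / tlam j) :
    (P u) ⬝ᵥ (A *ᵥ tu j) =
      (1 / (1 / lam - 1 / tlam j)) * ((u - P u) ⬝ᵥ tu j) ∧
    (P u) ⬝ᵥ (A *ᵥ tu j) =
      (tlam j * lam / (tlam j - lam)) * ((u - P u) ⬝ᵥ tu j) := by
  have hsymm : A.IsSymm := Matrix.isHermitian_iff_isSymm.mp hA.isHermitian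
  have hritz := dotProduct_mulVec_eq_of_ritz (hRitz j) (hPmem u)
  have hgal := galerkin_dotProduct_mulVec_of_mulVec_eq_smul hsymm hPproj heig (htu j)
  have hlam : lam ≠ 0 := (hA.pos_of_mulVec_eq_smul hu heig).ne'
  have htlam : tlam j ≠ 0 := by
    have hnorm := dotProduct_mulVec_eq_of_ritz (hRitz j) (htu j)
    rw [htortho j j, if_pos rfl] at hnorm
    exact left_ne_zero_of_mul (hnorm.symm.trans_ne one_ne_zero)
  have hmain : P u ⬝ᵥ (A *ᵥ tu j) = tlam j * lam / (tlam j - lam) * ((u - P u) ⬝ᵥ tu j) := by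
    rw [sub_dotProduct]
    exact eq_mul_div_sub_mul_sub_of_eq_mul (fun h ↦ hne (h ▸ rfl)) hritz hgal
  exact ⟨by rwa [one_div_one_div_sub_one_div hlam htlam], hmain⟩

/-- The identity (3.14): for an exact eigenpair `(λ, u)` with `μ = 1/λ ≠ μ̃_j`,
`(P_K u, ũ_j)_A = (1/(μ − μ̃_j)) (u − P_K u, ũ_j)
             = (λ̃_j λ/(λ̃_j − λ)) (u − P_K u, ũ_j)`. -/
theorem stmt11 {n m : ℕ} (A : Matrix (Fin n) (Fin n) ℝ) (hA : A.PosDef)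
    -- `K` is an `m`-dimensional subspace of `ℝⁿ`
    (K : Submodule ℝ (Fin n → ℝ)) (hK : Module.finrank ℝ K = m)
    -- `P` is the `A`-orthogonal (Galerkin) projection onto `K`
    (P : (Fin n → ℝ) →ₗ[ℝ] (Fin n → ℝ))
    (hPmem : ∀ x, P x ∈ K)
    (hPproj : ∀ x, ∀ y ∈ K, (P x) ⬝ᵥ (A *ᵥ y) = x ⬝ᵥ (A *ᵥ y))
    -- the Ritz pairs `(λ̃_j, ũ_j)` of `A` on `K`, with `A`-orthonormal Ritz vectors
    (tlam : Fin m → ℝ) (tu : Fin m → (Fin n → ℝ)) (htmono : Monotone tlam)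
    (htu : ∀ j, tu j ∈ K)
    (hRitz : ∀ j, ∀ v ∈ K, ((A *ᵥ tu j) - tlam j • tu j) ⬝ᵥ v = 0)
    (htortho : ∀ i j, tu i ⬝ᵥ (A *ᵥ tu j) = if i = j then (1 : ℝ) else 0)
    -- `(λ, u)` is an exact eigenpair of `A`
    (lam : ℝ) (u : Fin n → ℝ) (hu : u ≠ 0) (heig : A *ᵥ u = lam • u)
    (j : Fin m) (hne : 1 / lam ≠ 1 / tlam j) :
    (P u) ⬝ᵥ (A *ᵥ tu j) =
      (1 / (1 / lam - 1 / tlam j)) * ((u - P u) ⬝ᵥ tu j) ∧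
    (P u) ⬝ᵥ (A *ᵥ tu j) =
      (tlam j * lam / (tlam j - lam)) * ((u - P u) ⬝ᵥ tu j) :=
  stmt11_general A hA K P hPmem hPproj tlam tu htu hRitz htortho lam u hu heig j hne
end

section
/- Let (λ, u) be an exact eigenpair of A, μ = 1/λ, and let i ∈ {1,…,m} be such that δ_i := min_{j≠i, 1≤j≤m} |μ̃_j − μ| > 0. Let E_m^{(i)} be the A-orthogonal projection onto span{ũ_i}. Then ‖(I − E_m^{(i)}) P_K u‖_A ≤ (√(μ̃_1)/δ_i) · ‖u − P_K u‖₂. -/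
open Matrix

/-!
Expand `z = P u − E (P u)` in the `A`-orthonormal Ritz basis of `K`: its coefficients are
`c_j = (P u, ũ_j)_A` for `j ≠ i` and `c_i = 0`, so `‖z‖_A² = ∑ c_j²`. Because `A u = λ u` and
`A ũ_j − λ̃_j ũ_j ⊥ K`, the residual satisfies `(ũ_j, u − P u) = c_j (μ − μ̃_j)`, which is at least
`δ |c_j|` in absolute value. The Ritz vectors are `L²`-orthogonal with `‖ũ_j‖₂² = μ̃_j ≤ μ̃_1`, so
Bessel's inequality gives `λ̃_1 δ² ∑ c_j² ≤ ‖u − P u‖₂²`.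
-/

section DotProduct

variable {ι κ : Type*} [Fintype ι] [Fintype κ]

theorem Matrix.IsHermitian.dotProduct_mulVec_comm {A : Matrix ι ι ℝ} (hA : A.IsHermitian)
    (x y : ι → ℝ) : x ⬝ᵥ (A *ᵥ y) = y ⬝ᵥ (A *ᵥ x) := by
  have hAt : Aᵀ = A := by simpa only [conjTranspose_eq_transpose_of_trivial] using hA.eq
  rw [dotProduct_mulVec, ← mulVec_transpose, hAt, dotProduct_comm]

theorem pos_of_mul_dotProduct_self_eq_one {s : ℝ} {v : ι → ℝ} (h : s * (v ⬝ᵥ v) = 1) :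
    0 < s := by
  have hv : 0 ≤ v ⬝ᵥ v := by simpa using dotProduct_self_star_nonneg v
  by_contra! hs
  nlinarith [mul_nonpos_of_nonpos_of_nonneg hs hv]

theorem sum_sq_dotProduct_le [DecidableEq κ] {v : κ → ι → ℝ}
    (hv : ∀ j k, v j ⬝ᵥ v k = if j = k then 1 else 0) (w : ι → ℝ) :
    ∑ j, (v j ⬝ᵥ w) ^ 2 ≤ w ⬝ᵥ w := by
  have hon : Orthonormal ℝ (fun j => WithLp.toLp 2 (v j) : κ → EuclideanSpace ℝ ι) := by
    rw [orthonormal_iff_ite]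
    intro j k
    rw [EuclideanSpace.inner_toLp_toLp, star_trivial, dotProduct_comm, hv]
  have h := hon.sum_inner_products_le (WithLp.toLp 2 w : EuclideanSpace ℝ ι) (s := Finset.univ)
  rw [← real_inner_self_eq_norm_sq, EuclideanSpace.inner_toLp_toLp, star_trivial] at h
  simpa only [EuclideanSpace.inner_toLp_toLp, star_trivial, Real.norm_eq_abs, sq_abs,
    dotProduct_comm] using h

theorem sum_mul_sq_dotProduct_le [DecidableEq κ] {s : κ → ℝ} {v : κ → ι → ℝ}
    (hv : ∀ j k, s j * (v j ⬝ᵥ v k) = if j = k then 1 else 0) (w : ι → ℝ) :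
    ∑ j, s j * (v j ⬝ᵥ w) ^ 2 ≤ w ⬝ᵥ w := by
  have hs j : 0 ≤ s j := (pos_of_mul_dotProduct_self_eq_one (by simpa using hv j j)).le
  have hv' j k : (√(s j) • v j) ⬝ᵥ (√(s k) • v k) = if j = k then 1 else 0 := by
    rw [smul_dotProduct, dotProduct_smul, smul_eq_mul, smul_eq_mul]
    split_ifs with hjk
    · subst hjk
      rw [← mul_assoc, Real.mul_self_sqrt (hs j), hv, if_pos rfl]
    · rcases mul_eq_zero.1 ((hv j k).trans (if_neg hjk)) with h | h <;> simp [h]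
  convert sum_sq_dotProduct_le hv' w using 2 with j
  rw [smul_dotProduct, smul_eq_mul, mul_pow, Real.sq_sqrt (hs j)]

end DotProduct

section EnergyOrthonormal

variable {ι κ : Type*} [Fintype ι] [Fintype κ] {A : Matrix ι ι ℝ} {v : κ → ι → ℝ}

theorem sum_smul_dotProduct_mulVec [DecidableEq κ]
    (hv : ∀ j k, v j ⬝ᵥ (A *ᵥ v k) = if j = k then 1 else 0) (g : κ → ℝ) (j : κ) :
    (∑ k, g k • v k) ⬝ᵥ (A *ᵥ v j) = g j := by
  simp [sum_dotProduct, hv]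

theorem linearIndependent_of_dotProduct_mulVec_eq_ite [DecidableEq κ]
    (hv : ∀ j k, v j ⬝ᵥ (A *ᵥ v k) = if j = k then 1 else 0) : LinearIndependent ℝ v := by
  rw [Fintype.linearIndependent_iff]
  intro g hg j
  simpa [hg] using (sum_smul_dotProduct_mulVec hv g j).symm

theorem span_range_eq_of_dotProduct_mulVec_eq_ite [DecidableEq κ] {K : Submodule ℝ (ι → ℝ)}
    (hK : Module.finrank ℝ K = Fintype.card κ) (hvK : ∀ j, v j ∈ K)
    (hv : ∀ j k, v j ⬝ᵥ (A *ᵥ v k) = if j = k then 1 else 0) :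
    Submodule.span ℝ (Set.range v) = K := by
  refine Submodule.eq_of_le_of_finrank_le (Submodule.span_le.2 (Set.range_subset_iff.2 hvK)) ?_
  rw [hK, finrank_span_eq_card (linearIndependent_of_dotProduct_mulVec_eq_ite hv)]

theorem eq_sum_dotProduct_mulVec_smul [DecidableEq κ] {z : ι → ℝ}
    (hv : ∀ j k, v j ⬝ᵥ (A *ᵥ v k) = if j = k then 1 else 0)
    (hz : z ∈ Submodule.span ℝ (Set.range v)) :
    z = ∑ j, (z ⬝ᵥ (A *ᵥ v j)) • v j := by
  obtain ⟨g, rfl⟩ := (Submodule.mem_span_range_iff_exists_fun ℝ).1 hz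
  simp only [sum_smul_dotProduct_mulVec hv]

theorem dotProduct_mulVec_self_eq_sum_sq {z : ι → ℝ}
    (hz : z = ∑ j, (z ⬝ᵥ (A *ᵥ v j)) • v j) :
    z ⬝ᵥ (A *ᵥ z) = ∑ j, (z ⬝ᵥ (A *ᵥ v j)) ^ 2 := by
  nth_rewrite 2 [hz]
  simp only [mulVec_sum, mulVec_smul, dotProduct_sum, dotProduct_smul, smul_eq_mul, sq]

end EnergyOrthonormal

theorem dotProduct_sub_eq_mul_one_div_sub_one_div {ι : Type*} [Fintype ι] {A : Matrix ι ι ℝ}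
    (hA : A.IsHermitian) {x p t : ι → ℝ} {lam μ : ℝ} (hlam : lam ≠ 0) (hμ : μ ≠ 0)
    (heig : A *ᵥ x = lam • x) (hp : p ⬝ᵥ (A *ᵥ t) = x ⬝ᵥ (A *ᵥ t))
    (hritz : p ⬝ᵥ (A *ᵥ t) = μ * (t ⬝ᵥ p)) :
    t ⬝ᵥ (x - p) = p ⬝ᵥ (A *ᵥ t) * (1 / lam - 1 / μ) := by
  have hx : p ⬝ᵥ (A *ᵥ t) = lam * (t ⬝ᵥ x) := by
    rw [hp, hA.dotProduct_mulVec_comm, heig, dotProduct_smul, smul_eq_mul]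
  have hx' : t ⬝ᵥ x = p ⬝ᵥ (A *ᵥ t) / lam := by rw [hx]; field_simp
  have hp' : t ⬝ᵥ p = p ⬝ᵥ (A *ᵥ t) / μ := by rw [hritz]; field_simp
  rw [dotProduct_sub, hx', hp']
  ring

theorem sqrt_le_sqrt_one_div_div_mul_sqrt {a δ S W : ℝ} (ha : 0 < a) (hδ : 0 < δ)
    (h : a * δ ^ 2 * S ≤ W) : √S ≤ √(1 / a) / δ * √W := by
  have hS : S ≤ 1 / a / δ ^ 2 * W := by
    rw [div_div, one_div_mul_eq_div, le_div_iff₀ (by positivity), mul_comm]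
    exact h
  calc √S ≤ √(1 / a / δ ^ 2 * W) := Real.sqrt_le_sqrt hS
    _ = √(1 / a) / δ * √W := by
      rw [Real.sqrt_mul (by positivity), Real.sqrt_div' _ (by positivity), Real.sqrt_sq hδ.le]

theorem dotProduct_mulVec_eq_mul_of_ritz {ι : Type*} [Fintype ι] {A : Matrix ι ι ℝ}
    {t v : ι → ℝ} {θ : ℝ} (h : ((A *ᵥ t) - θ • t) ⬝ᵥ v = 0) :
    v ⬝ᵥ (A *ᵥ t) = θ * (t ⬝ᵥ v) := by
  rw [sub_dotProduct, smul_dotProduct, smul_eq_mul, sub_eq_zero] at h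
  rw [dotProduct_comm, h]

theorem sub_dotProduct_mulVec_eq_ite {ι κ : Type*} [Fintype ι] [DecidableEq κ]
    {A : Matrix ι ι ℝ} {v : κ → ι → ℝ}
    (hv : ∀ j k, v j ⬝ᵥ (A *ᵥ v k) = if j = k then 1 else 0) {i : κ} {x e : ι → ℝ}
    (he : e ∈ Submodule.span ℝ {v i}) (hproj : e ⬝ᵥ (A *ᵥ v i) = x ⬝ᵥ (A *ᵥ v i)) (j : κ) :
    (x - e) ⬝ᵥ (A *ᵥ v j) = if j = i then 0 else x ⬝ᵥ (A *ᵥ v j) := by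
  split_ifs with hj
  · rw [hj, sub_dotProduct, hproj, sub_self]
  · obtain ⟨a, rfl⟩ := Submodule.mem_span_singleton.1 he
    rw [sub_dotProduct, smul_dotProduct, hv, if_neg (Ne.symm hj), smul_zero, sub_zero]

/-- The estimate (3.16): `‖(I − E_m^{(i)}) P_K u‖_A ≤ (√(μ̃_1)/δ_i) ‖u − P_K u‖₂`. -/
theorem stmt12 {n m : ℕ} (A : Matrix (Fin n) (Fin n) ℝ) (hA : A.PosDef)
    -- `K` is an `m`-dimensional subspace of `ℝⁿ`
    (K : Submodule ℝ (Fin n → ℝ)) (hK : Module.finrank ℝ K = m)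
    -- `P` is the `A`-orthogonal (Galerkin) projection onto `K`
    (P : (Fin n → ℝ) →ₗ[ℝ] (Fin n → ℝ))
    (hPmem : ∀ x, P x ∈ K)
    (hPproj : ∀ x, ∀ y ∈ K, (P x) ⬝ᵥ (A *ᵥ y) = x ⬝ᵥ (A *ᵥ y))
    -- the Ritz pairs `(λ̃_j, ũ_j)` of `A` on `K`, with `A`-orthonormal Ritz vectors
    (tlam : Fin m → ℝ) (tu : Fin m → (Fin n → ℝ)) (htmono : Monotone tlam)
    (htu : ∀ j, tu j ∈ K)
    (hRitz : ∀ j, ∀ v ∈ K, ((A *ᵥ tu j) - tlam j • tu j) ⬝ᵥ v = 0)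
    (htortho : ∀ i j, tu i ⬝ᵥ (A *ᵥ tu j) = if i = j then (1 : ℝ) else 0)
    -- `(λ, u)` is an exact eigenpair of `A`
    (lam : ℝ) (u : Fin n → ℝ) (hu : u ≠ 0) (heig : A *ᵥ u = lam • u)
    -- `δ_i > 0` is (a lower bound for) `min_{j ≠ i} |μ̃_j − μ|` where `μ = 1/λ`, `μ̃_j = 1/λ̃_j`
    (i : Fin m) (δ : ℝ) (hδpos : 0 < δ)
    (hδ : ∀ j : Fin m, j ≠ i → δ ≤ |1 / tlam j - 1 / lam|)
    -- `E` is the `A`-orthogonal projection `E_m^{(i)}` onto `span{ũ_i}`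
    (E : (Fin n → ℝ) →ₗ[ℝ] (Fin n → ℝ))
    (hEmem : ∀ x, E x ∈ Submodule.span ℝ {tu i})
    (hEproj : ∀ x, ∀ y ∈ Submodule.span ℝ {tu i},
      (E x) ⬝ᵥ (A *ᵥ y) = x ⬝ᵥ (A *ᵥ y)) :
    aN A (P u - E (P u)) ≤
      Real.sqrt (1 / tlam ⟨0, i.pos⟩) / δ * l2N (u - P u) := by
  have hritz j {v} (hv : v ∈ K) : v ⬝ᵥ (A *ᵥ tu j) = tlam j * (tu j ⬝ᵥ v) :=
    dotProduct_mulVec_eq_mul_of_ritz (hRitz j v hv)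
  have hortho j k : tlam j * (tu j ⬝ᵥ tu k) = if j = k then 1 else 0 := by
    rw [← hritz j (htu k), htortho]
    exact if_congr eq_comm rfl rfl
  have htlam_pos j : 0 < tlam j := pos_of_mul_dotProduct_self_eq_one (by simpa using hortho j j)
  have hlam : lam ≠ 0 := by
    rintro rfl
    simpa [heig] using hA.dotProduct_mulVec_pos hu
  set z := P u - E (P u)
  set w := u - P u
  have hzK : z ∈ K :=
    K.sub_mem (hPmem u) (Submodule.span_singleton_le_iff_mem _ _ |>.2 (htu i) (hEmem _))
  have hz : z ⬝ᵥ (A *ᵥ z) = ∑ j, (z ⬝ᵥ (A *ᵥ tu j)) ^ 2 := by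
    refine dotProduct_mulVec_self_eq_sum_sq (eq_sum_dotProduct_mulVec_smul htortho ?_)
    rwa [span_range_eq_of_dotProduct_mulVec_eq_ite (by simpa using hK) htu htortho]
  have hcoeff j : δ ^ 2 * (z ⬝ᵥ (A *ᵥ tu j)) ^ 2 ≤ (tu j ⬝ᵥ w) ^ 2 := by
    rw [sub_dotProduct_mulVec_eq_ite htortho (hEmem _)
      (hEproj _ _ (Submodule.mem_span_singleton_self _))]
    split_ifs with hj
    · simpa using sq_nonneg _
    · rw [dotProduct_sub_eq_mul_one_div_sub_one_div hA.isHermitian hlam (htlam_pos j).ne' heig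
        (hPproj u _ (htu j)) (hritz j (hPmem u)), mul_pow, mul_comm (δ ^ 2)]
      refine mul_le_mul_of_nonneg_left ?_ (sq_nonneg _)
      rw [← sq_abs (1 / lam - _), abs_sub_comm]
      exact pow_le_pow_left₀ hδpos.le (hδ j hj) 2
  have hsum : tlam ⟨0, i.pos⟩ * δ ^ 2 * ∑ j, (z ⬝ᵥ (A *ᵥ tu j)) ^ 2 ≤ w ⬝ᵥ w := calc
    _ ≤ ∑ j, tlam j * (tu j ⬝ᵥ w) ^ 2 := by
      rw [Finset.mul_sum]
      refine Finset.sum_le_sum fun j _ => ?_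
      rw [mul_assoc]
      exact mul_le_mul (htmono (Nat.zero_le _)) (hcoeff j) (by positivity) (htlam_pos j).le
    _ ≤ w ⬝ᵥ w := sum_mul_sq_dotProduct_le hortho w
  rw [aN, l2N, hz]
  exact sqrt_le_sqrt_one_div_div_mul_sqrt (htlam_pos _) hδpos hsum
end
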